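/- Let X ∈ ℂ^{n×n} be diagonalizable with all eigenvalues positive real numbers. Then there exists a unique Y ∈ ℂ^{n×n} which is diagonalizable with all eigenvalues real and satisfies exp(Y) = X; i.e., the matrix exponential is a bijection from the set of n×n complex matrices that are diagonalizable with real eigenvalues onto the set of n×n complex matrices that are diagonalizable with positive eigenvalues. -/

import Mathlib

open Matrix

/-- `Y` is diagonalizable with all eigenvalues real: `Y = S Λ S⁻¹` for some invertible
`S` and a diagonal matrix `Λ` with real diagonal entries. -/
def DiagonalizableWithRealEigenvalues {m : Type*} [Fintype m] [DecidableEq m]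
    (Y : Matrix m m ℂ) : Prop :=
  ∃ (S : Matrix m m ℂ) (d : m → ℝ),
    IsUnit S ∧ Y = S * Matrix.diagonal (fun i => (d i : ℂ)) * S⁻¹

/-- `X` is diagonalizable with all eigenvalues positive real numbers: `X = S Λ S⁻¹`
for some invertible `S` and a diagonal matrix `Λ` with positive real diagonal
entries. -/
def DiagonalizableWithPosEigenvalues {m : Type*} [Fintype m] [DecidableEq m]
    (X : Matrix m m ℂ) : Prop :=
  ∃ (S : Matrix m m ℂ) (d : m → ℝ),
    IsUnit S ∧ (∀ i, 0 < d i) ∧ X = S * Matrix.diagonal (fun i => (d i : ℂ)) * S⁻¹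

open Polynomial

/-- Conjugation by a unit as an algebra homomorphism. -/
def conjAlgHom {R A : Type*} [CommSemiring R] [Ring A] [Algebra R A] (u : Aˣ) :
    A →ₐ[R] A where
  toFun a := ↑u * a * ↑u⁻¹
  map_one' := by simp
  map_mul' a b := by simp [mul_assoc]
  map_zero' := by simp
  map_add' a b := by simp [mul_add, add_mul]
  commutes' r := by
    simp only [← Algebra.commutes, mul_assoc]
    simp

lemma aeval_conj {m : Type*} [Fintype m] [DecidableEq m] {S : Matrix m m ℂ}
    (hS : IsUnit S) (A : Matrix m m ℂ) (p : ℂ[X]) :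
    aeval (S * A * S⁻¹) p = S * aeval A p * S⁻¹ := by
  rw [← hS.unit_spec, ← Matrix.coe_units_inv]
  exact Polynomial.aeval_algHom_apply (conjAlgHom (R := ℂ) hS.unit) A p

lemma spec_conj {m : Type*} [Fintype m] [DecidableEq m] {S : Matrix m m ℂ}
    (hS : IsUnit S) (A : Matrix m m ℂ) :
    spectrum ℂ (S * A * S⁻¹) = spectrum ℂ A := by
  rw [← hS.unit_spec, ← Matrix.coe_units_inv]
  exact spectrum.units_conjugate

lemma aeval_diag {m : Type*} [Fintype m] [DecidableEq m] (d : m → ℂ) (p : ℂ[X]) :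
    aeval (Matrix.diagonal d) p = Matrix.diagonal (fun i => p.eval (d i)) := by
  have h := Polynomial.aeval_algHom_apply (Matrix.diagonalAlgHom (n := m) (α := ℂ) ℂ) d p
  simp only [Matrix.diagonalAlgHom_apply] at h
  rw [h]
  have h3 : (aeval d) p = fun i => p.eval (d i) := by
    funext i
    have h2 := Polynomial.aeval_algHom_apply (Pi.evalAlgHom ℂ (fun _ : m => ℂ) i) d p
    simp only [Pi.evalAlgHom_apply] at h2
    rw [← h2, Polynomial.coe_aeval_eq_eval]
  rw [h3]

lemma exp_conj_diag {m : Type*} [Fintype m] [DecidableEq m] {T : Matrix m m ℂ}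
    (hT : IsUnit T) (c : m → ℝ) :
    NormedSpace.exp (T * Matrix.diagonal (fun i => (c i : ℂ)) * T⁻¹)
      = T * Matrix.diagonal (fun i => ((Real.exp (c i) : ℝ) : ℂ)) * T⁻¹ := by
  rw [Matrix.exp_conj T _ hT, Matrix.exp_diagonal]
  have h3 : NormedSpace.exp (fun i => (c i : ℂ)) = fun i => ((Real.exp (c i) : ℝ) : ℂ) := by
    funext i
    rw [Pi.coe_exp, ← Complex.exp_eq_exp_ℂ, Complex.ofReal_exp]
  rw [h3]

lemma log_unique {m : Type*} [Fintype m] [DecidableEq m] {S : Matrix m m ℂ} {μ : m → ℝ}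
    (hS : IsUnit S) (hμ : ∀ i, 0 < μ i) {Y : Matrix m m ℂ}
    (hY : DiagonalizableWithRealEigenvalues Y)
    (hexp : NormedSpace.exp Y = S * Matrix.diagonal (fun i => (μ i : ℂ)) * S⁻¹) :
    Y = S * Matrix.diagonal (fun i => ((Real.log (μ i) : ℝ) : ℂ)) * S⁻¹ := by
  classical
  obtain ⟨T, c, hT, rfl⟩ := hY
  rw [exp_conj_diag hT] at hexp
  have hspec : ∀ i, ∃ j, (μ i : ℂ) = ((Real.exp (c j) : ℝ) : ℂ) := by
    intro i
    have h1 : (μ i : ℂ) ∈ spectrum ℂ (S * Matrix.diagonal (fun i => (μ i : ℂ)) * S⁻¹) := by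
      rw [spec_conj hS, spectrum_diagonal]
      exact ⟨i, rfl⟩
    rw [← hexp, spec_conj hT, spectrum_diagonal] at h1
    obtain ⟨j, hj⟩ := h1
    exact ⟨j, hj.symm⟩
  set s : Finset ℂ := Finset.image (fun j => ((Real.exp (c j) : ℝ) : ℂ)) Finset.univ with hs
  set p : ℂ[X] := Lagrange.interpolate s id (fun z => ((Real.log z.re : ℝ) : ℂ)) with hp
  have hinj : Set.InjOn (id : ℂ → ℂ) s := Function.injective_id.injOn
  have hnode : ∀ z ∈ s, p.eval z = ((Real.log z.re : ℝ) : ℂ) := fun z hz => by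
    rw [hp]; exact Lagrange.eval_interpolate_at_node _ hinj hz
  have hc : ∀ j, p.eval ((Real.exp (c j) : ℝ) : ℂ) = (c j : ℂ) := by
    intro j
    rw [hnode _ (Finset.mem_image_of_mem _ (Finset.mem_univ j)), Complex.ofReal_re,
      Real.log_exp]
  have hμv : ∀ i, p.eval ((μ i : ℂ)) = ((Real.log (μ i) : ℝ) : ℂ) := by
    intro i
    obtain ⟨j, hj⟩ := hspec i
    rw [hnode _ (by rw [hj]; exact Finset.mem_image_of_mem _ (Finset.mem_univ j)),
      Complex.ofReal_re]
  have e1 : aeval (T * Matrix.diagonal (fun j => ((Real.exp (c j) : ℝ) : ℂ)) * T⁻¹) p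
      = T * Matrix.diagonal (fun j => (c j : ℂ)) * T⁻¹ := by
    rw [aeval_conj hT, aeval_diag, funext hc]
  have e2 : aeval (S * Matrix.diagonal (fun i => (μ i : ℂ)) * S⁻¹) p
      = S * Matrix.diagonal (fun i => ((Real.log (μ i) : ℝ) : ℂ)) * S⁻¹ := by
    rw [aeval_conj hS, aeval_diag, funext hμv]
  calc T * Matrix.diagonal (fun j => (c j : ℂ)) * T⁻¹
      = aeval (T * Matrix.diagonal (fun j => ((Real.exp (c j) : ℝ) : ℂ)) * T⁻¹) p := e1.symm
    _ = aeval (S * Matrix.diagonal (fun i => (μ i : ℂ)) * S⁻¹) p := by rw [hexp]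
    _ = S * Matrix.diagonal (fun i => ((Real.log (μ i) : ℝ) : ℂ)) * S⁻¹ := e2

lemma exp_log_eq {m : Type*} [Fintype m] [DecidableEq m] {S : Matrix m m ℂ} {μ : m → ℝ}
    (hS : IsUnit S) (hμ : ∀ i, 0 < μ i) :
    NormedSpace.exp (S * Matrix.diagonal (fun i => ((Real.log (μ i) : ℝ) : ℂ)) * S⁻¹)
      = S * Matrix.diagonal (fun i => (μ i : ℂ)) * S⁻¹ := by
  rw [exp_conj_diag hS]
  have : (fun i => ((Real.exp (Real.log (μ i)) : ℝ) : ℂ)) = fun i => (μ i : ℂ) := by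
    funext i; rw [Real.exp_log (hμ i)]
  rw [this]

/-- Every complex matrix `X` which is diagonalizable with positive real eigenvalues has
a unique logarithm `Y` that is diagonalizable with real eigenvalues; i.e. the matrix
exponential is a bijection from the set of matrices diagonalizable with real
eigenvalues onto the set of matrices diagonalizable with positive eigenvalues. -/
theorem exp_bijOn_diagonalizable {m : Type*} [Fintype m] [DecidableEq m] :
    (∀ X : Matrix m m ℂ, DiagonalizableWithPosEigenvalues X →
      ∃! Y : Matrix m m ℂ, DiagonalizableWithRealEigenvalues Y ∧
        NormedSpace.exp Y = X) ∧
    Set.BijOn (NormedSpace.exp)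
      {Y : Matrix m m ℂ | DiagonalizableWithRealEigenvalues Y}
      {X : Matrix m m ℂ | DiagonalizableWithPosEigenvalues X} := by
  constructor
  · rintro X ⟨S, μ, hS, hμ, rfl⟩
    refine ⟨S * Matrix.diagonal (fun i => ((Real.log (μ i) : ℝ) : ℂ)) * S⁻¹,
      ⟨⟨S, fun i => Real.log (μ i), hS, rfl⟩, exp_log_eq hS hμ⟩, ?_⟩
    rintro Y ⟨hY, hYexp⟩
    exact log_unique hS hμ hY hYexp
  · refine ⟨?_, ?_, ?_⟩
    · rintro Y ⟨T, c, hT, rfl⟩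
      exact ⟨T, fun j => Real.exp (c j), hT, fun j => Real.exp_pos _, exp_conj_diag hT c⟩
    · rintro Y₁ h₁ Y₂ ⟨T, c, hT, rfl⟩ heq
      have h2exp := exp_conj_diag hT c
      have hpos : ∀ j, 0 < Real.exp (c j) := fun j => Real.exp_pos _
      have e₁ := log_unique hT hpos h₁ (heq.trans h2exp)
      have e₂ := log_unique hT hpos ⟨T, c, hT, rfl⟩ h2exp
      exact e₁.trans e₂.symm
    · rintro X ⟨S, μ, hS, hμ, rfl⟩
      exact ⟨S * Matrix.diagonal (fun i => ((Real.log (μ i) : ℝ) : ℂ)) * S⁻¹,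
        ⟨S, fun i => Real.log (μ i), hS, rfl⟩, exp_log_eq hS hμ⟩
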